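/- arXiv:0708.3333 — 8 statements merged into one kernel-verified Lean document; each statement's English description precedes it below -/
import Mathlib

section
/- Let f : X → Y and g : Y' → Y be continuous maps of topological spaces, and let f' : X ×_Y Y' → Y' be the pullback of f along g. If f' is a closed map and g is a quotient map, then f is a closed map. -/
open Topology

/-- If the pullback `f' : X ×_Y Y' → Y'` of `f : X → Y` along a quotient map
`g : Y' → Y` is a closed map, then `f` is a closed map. -/
theorem stmt_1 {X Y Y' : Type*} [TopologicalSpace X] [TopologicalSpace Y]
    [TopologicalSpace Y'] (f : X → Y) (g : Y' → Y)
    (hf : Continuous f) (hg : Continuous g)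
    (hf' : IsClosedMap (fun p : {p : X × Y' // f p.1 = g p.2} => p.1.2))
    (hgq : IsQuotientMap g) : IsClosedMap f := by
  intro C hC
  rw [← hgq.isClosed_preimage]
  have key : g ⁻¹' (f '' C) =
      (fun p : {p : X × Y' // f p.1 = g p.2} => p.1.2) ''
        {p : {p : X × Y' // f p.1 = g p.2} | p.1.1 ∈ C} := by
    ext y'
    constructor
    · rintro ⟨x, hx, hfx⟩
      exact ⟨⟨(x, y'), hfx⟩, hx, rfl⟩
    · rintro ⟨⟨⟨x, z⟩, hp⟩, hx, rfl⟩
      exact ⟨x, hx, hp⟩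
  rw [key]
  exact hf' _ (hC.preimage (continuous_fst.comp continuous_subtype_val))
end

section
/- Let f : X → Y and g : Y' → Y be continuous maps of topological spaces, and let f' : X ×_Y Y' → Y' be the pullback of f along g. If f' is a quotient map and g is a quotient map, then f is a quotient map. -/
open Topology

/-- If the pullback `f' : X ×_Y Y' → Y'` of `f : X → Y` along a quotient map
`g : Y' → Y` is a quotient map, then `f` is a quotient map. -/
theorem stmt_2 {X Y Y' : Type*} [TopologicalSpace X] [TopologicalSpace Y]
    [TopologicalSpace Y'] (f : X → Y) (g : Y' → Y)
    (hf : Continuous f) (hg : Continuous g)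
    (hf' : IsQuotientMap (fun p : {p : X × Y' // f p.1 = g p.2} => p.1.2))
    (hgq : IsQuotientMap g) : IsQuotientMap f := by
  have hcomp : IsQuotientMap (g ∘ fun p : {p : X × Y' // f p.1 = g p.2} => p.1.2) :=
    hgq.comp hf'
  have heq : (g ∘ fun p : {p : X × Y' // f p.1 = g p.2} => p.1.2)
      = f ∘ fun p : {p : X × Y' // f p.1 = g p.2} => p.1.1 := by
    funext p
    exact p.2.symm
  rw [heq] at hcomp
  exact IsQuotientMap.of_comp (by fun_prop) hf hcomp
end

section
/- Let G be a finite group acting by ring automorphisms on a commutative ring B. Then the induced map Spec B → Spec B^G on prime spectra is surjective. -/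
/-- The invariant subring `B^G` of a finite group acting by ring
automorphisms on a commutative ring `B`. -/
def fixedSubring (G B : Type*) [Group G] [CommRing B] [MulSemiringAction G B] :
    Subring B where
  carrier := {b | ∀ g : G, g • b = b}
  one_mem' := fun g => smul_one g
  mul_mem' := fun ha hb g => by rw [smul_mul', ha g, hb g]
  add_mem' := fun ha hb g => by rw [smul_add, ha g, hb g]
  zero_mem' := fun g => smul_zero g
  neg_mem' := fun {a} ha g => by rw [smul_neg, ha g]

theorem fixedSubring_isIntegral {G B : Type*} [Group G] [Finite G] [CommRing B]
    [MulSemiringAction G B] : Algebra.IsIntegral (fixedSubring G B) B := by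
  cases nonempty_fintype G
  constructor
  intro x
  have hcoeff : ((prodXSubSMul G B x).coeffs : Set B) ⊆ fixedSubring G B := by
    intro c hc
    simp only [Finset.mem_coe, Polynomial.mem_coeffs_iff] at hc
    obtain ⟨n, -, rfl⟩ := hc
    exact fun g => prodXSubSMul.coeff G B x g n
  refine ⟨(prodXSubSMul G B x).toSubring (fixedSubring G B) hcoeff, ?_, ?_⟩
  · rw [Polynomial.monic_toSubring]
    exact prodXSubSMul.monic G B x
  · have : Polynomial.eval₂ (algebraMap (fixedSubring G B) B) x
        ((prodXSubSMul G B x).toSubring (fixedSubring G B) hcoeff)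
        = Polynomial.eval x (((prodXSubSMul G B x).toSubring (fixedSubring G B) hcoeff).map
            (Subring.subtype (fixedSubring G B))) := by
      rw [Polynomial.eval_map]; rfl
    rw [this, Polynomial.map_toSubring]
    exact prodXSubSMul.eval G B x

/-- `Spec B → Spec B^G` is surjective for a finite group action. -/
theorem stmt_9 {G B : Type*} [Group G] [Finite G] [CommRing B]
    [MulSemiringAction G B] :
    Function.Surjective
      (PrimeSpectrum.comap (fixedSubring G B).subtype :
        PrimeSpectrum B → PrimeSpectrum (fixedSubring G B)) := by
  have : Algebra.IsIntegral (fixedSubring G B) B := fixedSubring_isIntegral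
  intro P
  obtain ⟨Q, -, hQ, hQ'⟩ := Ideal.exists_ideal_over_prime_of_isIntegral
    (S := B) P.asIdeal ⊥ (by
      intro x hx
      have hx0 : x = 0 := Subtype.ext (show ((x : B)) = 0 from Ideal.mem_bot.mp hx)
      simp [hx0])
  exact ⟨⟨Q, hQ⟩, PrimeSpectrum.ext hQ'⟩
end

section
/- Let G be a finite group acting by ring automorphisms on a commutative ring B, and let P, Q be prime ideals of B with P ∩ B^G = Q ∩ B^G. Then there exists g ∈ G such that Q = g • P, i.e., the fibers of Spec B → Spec B^G are exactly the G-orbits. -/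
open Pointwise

/-- If two primes lie over the same prime of the fixed ring, then one is
contained in some translate of the other. -/
theorem le_smul_of_comap_eq {G B : Type*} [Group G] [Finite G] [CommRing B]
    [MulSemiringAction G B] (P Q : Ideal B) [P.IsPrime] [Q.IsPrime]
    (h : P.comap (fixedSubring G B).subtype = Q.comap (fixedSubring G B).subtype) :
    ∃ g : G, Q ≤ g • P := by
  have := Fintype.ofFinite G
  classical
  have hsub : (Q : Set B) ⊆ ⋃ g ∈ ((Finset.univ : Finset G) : Set G),
      ((fun g : G => (g • P : Ideal B)) g : Set B) := by
    intro x hx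
    -- the "norm" of x is G-invariant
    have hfix : (∏ g : G, g • x) ∈ fixedSubring G B := by
      intro h'
      have : h' • (∏ g : G, g • x) = ∏ g : G, h' • (g • x) :=
        map_prod (MulSemiringAction.toRingHom G B h') _ _
      rw [this]
      refine Fintype.prod_equiv (Equiv.mulLeft h') _ _ fun g => ?_
      simp [mul_smul]
    -- the norm lies in Q, hence in the common contraction, hence in P
    have hQ : (∏ g : G, g • x) ∈ Q := by
      rw [← Finset.mul_prod_erase Finset.univ (fun g : G => g • x) (Finset.mem_univ 1),
        one_smul]
      exact Q.mul_mem_right _ hx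
    have hP : (∏ g : G, g • x) ∈ P := by
      have : (⟨_, hfix⟩ : fixedSubring G B) ∈ Q.comap (fixedSubring G B).subtype := hQ
      rw [← h] at this
      exact this
    obtain ⟨g, -, hg⟩ := Ideal.IsPrime.prod_mem_iff.mp hP
    refine Set.mem_biUnion (by simp : g⁻¹ ∈ ((Finset.univ : Finset G) : Set G)) ?_
    rw [SetLike.mem_coe, Ideal.mem_pointwise_smul_iff_inv_smul_mem, inv_inv]
    exact hg
  obtain ⟨g, -, hg⟩ := (Ideal.subset_union_prime (1 : G) 1
    (fun i _ _ _ => inferInstance)).mp hsub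
  exact ⟨g, hg⟩

/-- Two primes of `B` lying over the same prime of `B^G` are in the same
`G`-orbit: the fibers of `Spec B → Spec B^G` are exactly the `G`-orbits. -/
theorem stmt_10 {G B : Type*} [Group G] [Finite G] [CommRing B]
    [MulSemiringAction G B] (P Q : Ideal B) [P.IsPrime] [Q.IsPrime]
    (h : P.comap (fixedSubring G B).subtype = Q.comap (fixedSubring G B).subtype) :
    ∃ g : G, Q = g • P := by
  obtain ⟨g, hg⟩ := le_smul_of_comap_eq P Q h
  obtain ⟨g', hg'⟩ := le_smul_of_comap_eq Q P h.symm
  have mono : ∀ (a : G) {I J : Ideal B}, I ≤ J → a • I ≤ a • J :=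
    fun a _ _ hIJ => Ideal.map_mono hIJ
  set k := g * g' with hk
  have hQk : Q ≤ k • Q := by
    calc Q ≤ g • P := hg
    _ ≤ g • (g' • Q) := mono g hg'
    _ = k • Q := (mul_smul g g' Q).symm
  have key : ∀ m : ℕ, Q ≤ k ^ m • Q := by
    intro m
    induction m with
    | zero => simp
    | succ n ih =>
      calc Q ≤ k • Q := hQk
      _ ≤ k • (k ^ n • Q) := mono k ih
      _ = k ^ (n + 1) • Q := by rw [← mul_smul, ← pow_succ']
  have hkQ : k • Q = Q := by
    refine le_antisymm ?_ hQk
    have h1 : k • Q ≤ k • (k ^ (orderOf k - 1) • Q) := mono k (key _)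
    rwa [← mul_smul, ← pow_succ', Nat.sub_add_cancel (Nat.one_le_iff_ne_zero.mpr
      (orderOf_pos k).ne'), pow_orderOf_eq_one, one_smul] at h1
  refine ⟨g, le_antisymm hg ?_⟩
  calc g • P ≤ g • (g' • Q) := mono g hg'
  _ = k • Q := (mul_smul g g' Q).symm
  _ = Q := hkQ
end

section
/- Let s, t : R → X be continuous maps and q : X → Y a quotient map of topological spaces such that q ∘ s = q ∘ t. Suppose s is an open map and the map (s, t) : R → X ×_Y X is surjective (i.e., for all x, x' with q x = q x' there is r ∈ R with s r = x and t r = x'). Then q is an open map. -/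
open Topology

/-- If `q : X → Y` is a quotient map coequalizing `s, t : R → X`, `s` is an
open map, and `(s, t)` is surjective onto `X ×_Y X`, then `q` is an open
map. -/
theorem stmt_15 {R X Y : Type*} [TopologicalSpace R] [TopologicalSpace X]
    [TopologicalSpace Y] (s t : R → X) (q : X → Y)
    (hs : Continuous s) (ht : Continuous t)
    (hq : IsQuotientMap q) (hqs : q ∘ s = q ∘ t)
    (hsopen : IsOpenMap s)
    (hsurj : ∀ x x' : X, q x = q x' → ∃ r : R, s r = x ∧ t r = x') :
    IsOpenMap q := by
  intro U hU
  rw [hq.isOpen_preimage.symm]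
  have key : q ⁻¹' (q '' U) = s '' (t ⁻¹' U) := by
    ext x
    constructor
    · rintro ⟨u, hu, hux⟩
      obtain ⟨r, hr1, hr2⟩ := hsurj x u hux.symm
      exact ⟨r, by simpa [hr2] using hu, hr1⟩
    · rintro ⟨r, hr, rfl⟩
      exact ⟨t r, hr, (congrFun hqs r).symm⟩
  rw [key]
  exact hsopen _ (hU.preimage ht)
end

section
/- Let s, t : R → X be continuous maps and q : X → Y a quotient map of topological spaces such that q ∘ s = q ∘ t. Suppose s is a closed map and the map (s, t) : R → X ×_Y X is surjective. Then q is a closed map. -/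
open Topology

/-- If `q : X → Y` is a quotient map coequalizing `s, t : R → X`, `s` is an
open map, and `(s, t)` is surjective onto `X ×_Y X`, then `q` is an open
map. -/
theorem stmt_16 {R X Y : Type*} [TopologicalSpace R] [TopologicalSpace X]
    [TopologicalSpace Y] (s t : R → X) (q : X → Y)
    (hs : Continuous s) (ht : Continuous t)
    (hq : IsQuotientMap q) (hqs : q ∘ s = q ∘ t)
    (hsclosed : IsClosedMap s)
    (hsurj : ∀ x x' : X, q x = q x' → ∃ r : R, s r = x ∧ t r = x') :
    IsClosedMap q := by
  intro C hC
  rw [← hq.isClosed_preimage]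
  have key : q ⁻¹' (q '' C) = s '' (t ⁻¹' C) := by
    ext x
    constructor
    · rintro ⟨c, hc, hqc⟩
      obtain ⟨r, hr1, hr2⟩ := hsurj x c hqc.symm
      exact ⟨r, by simp [hr2, hc], hr1⟩
    · rintro ⟨r, hr, rfl⟩
      exact ⟨t r, hr, (congrFun hqs r).symm⟩
  rw [key]
  exact hsclosed _ (hC.preimage ht)
end

section
/- Let G be a finite group acting by ring automorphisms on a commutative ring B and let q : Spec B → Spec B^G be the induced map on prime spectra. Then q is a quotient map of topological spaces, i.e., a subset of Spec B^G is open if and only if its preimage under q is open. -/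
open Topology

/-!
Every `b : B` is a root of the monic polynomial `∏ g, (X - g • b)` with coefficients in `B^G`,
so `B` is integral over `B^G`. By going-up, `Spec B → Spec B^G` is then surjective and closed,
and a closed continuous surjection is a quotient map.
-/

theorem RingHom.IsIntegral.isQuotientMap_comap {R S : Type*} [CommRing R] [CommRing S]
    {f : R →+* S} (hf : f.IsIntegral) (hinj : Function.Injective f) :
    IsQuotientMap (PrimeSpectrum.comap f) :=
  (PrimeSpectrum.isClosedMap_comap_of_isIntegral f hf).isQuotientMap
    (PrimeSpectrum.continuous_comap f) (hf.comap_surjective hinj)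

instance fixedSubring.isInvariant (G B : Type*) [Group G] [CommRing B]
    [MulSemiringAction G B] : Algebra.IsInvariant (fixedSubring G B) B G :=
  ⟨fun b hb => ⟨⟨b, hb⟩, rfl⟩⟩

theorem fixedSubring.subtype_isIntegral (G B : Type*) [Group G] [Finite G] [CommRing B]
    [MulSemiringAction G B] : (fixedSubring G B).subtype.IsIntegral :=
  (Algebra.IsInvariant.isIntegral (fixedSubring G B) B G).isIntegral

/-- For a finite group action on `B`, the map `Spec B → Spec B^G` is a
quotient map of topological spaces. -/
theorem stmt_17 {G B : Type*} [Group G] [Finite G] [CommRing B]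
    [MulSemiringAction G B] :
    IsQuotientMap
      (PrimeSpectrum.comap (fixedSubring G B).subtype :
        PrimeSpectrum B → PrimeSpectrum (fixedSubring G B)) :=
  (fixedSubring.subtype_isIntegral G B).isQuotientMap_comap Subtype.val_injective
end

section
/- Let G be a finite group acting by ring automorphisms on a commutative ring B, and let f ∈ B^G be an invariant element. Then the invariants of the localization agree with the localization of the invariants: (B_f)^G ≅ (B^G)_f as rings. -/
/-!
An invariant fraction `b / fⁿ` of `B_f` gives `fᵏ (g • b - b) = 0` for each `g : G`. As `G` is
finite a single `k` works for all `g`, so `fᵏ b` is invariant and `b / fⁿ = fᵏ b / fⁿ⁺ᵏ` comes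
from `(B^G)_f`. Injectivity holds because localizing at `f` preserves the injectivity of
`B^G ⊆ B`.
-/

namespace IsLocalization.Away

theorem mem_range_of_mul_pow_mem_range {A Aₐ P : Type*} [CommSemiring A] [CommSemiring Aₐ]
    [CommSemiring P] [Algebra A Aₐ] (a : A) [IsLocalization.Away a Aₐ] (φ : Aₐ →+* P) {x : P}
    {n : ℕ} (hx : x * φ (algebraMap A Aₐ a) ^ n ∈ Set.range φ) : x ∈ Set.range φ := by
  obtain ⟨y, hy⟩ := hx
  refine ⟨y * invSelf a ^ n, ?_⟩
  rw [map_mul, hy, map_pow, mul_assoc, ← mul_pow, ← map_mul, mul_invSelf, map_one, one_pow,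
    mul_one]

theorem injective_of_comp_algebraMap_eq {A Aₐ B Bₐ : Type*} [CommRing A] [CommRing Aₐ]
    [CommRing B] [CommRing Bₐ] [Algebra A Aₐ] [Algebra B Bₐ] (a : A) {i : A →+* B}
    (hi : Function.Injective i) [IsLocalization.Away a Aₐ] [IsLocalization.Away (i a) Bₐ]
    {φ : Aₐ →+* Bₐ} (hφ : φ.comp (algebraMap A Aₐ) = (algebraMap B Bₐ).comp i) :
    Function.Injective φ := by
  have hφ_eq : φ = map Aₐ Bₐ i a :=
    IsLocalization.ringHom_ext (Submonoid.powers a) (hφ.trans (IsLocalization.map_comp _).symm)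
  rw [hφ_eq, map_injective_iff]
  exact fun b hb => ⟨0, by rw [pow_zero, one_mul]; exact hi (hb.trans (map_zero i).symm)⟩

end IsLocalization.Away

theorem exists_pow_mul_mem_fixedSubring {G B : Type*} [Group G] [Finite G] [CommRing B]
    [MulSemiringAction G B] {f b : B} (hf : f ∈ fixedSubring G B)
    (hb : ∀ g : G, ∃ k : ℕ, f ^ k * (g • b) = f ^ k * b) :
    ∃ N : ℕ, f ^ N * b ∈ fixedSubring G B := by
  choose k hk using hb
  obtain ⟨N, hN⟩ := Finite.exists_le k
  refine ⟨N, fun g => ?_⟩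
  obtain ⟨d, hd⟩ := Nat.exists_eq_add_of_le (hN g)
  rw [smul_mul', smul_pow', hf g, hd, pow_add, mul_right_comm, hk g, mul_right_comm]

/-- `gmap g` is the action of `g` on `B_f` and `φ` the canonical map `(B^G)_f → B_f`; the
conclusion says that `φ` is injective with image `(B_f)^G`. -/
theorem stmt_18 {G B : Type*} [Group G] [Finite G] [CommRing B]
    [MulSemiringAction G B] (f : B) (hf : f ∈ fixedSubring G B)
    (gmap : G → (Localization.Away f →+* Localization.Away f))
    (hgmap : ∀ g : G, (gmap g).comp (algebraMap B (Localization.Away f)) =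
      (algebraMap B (Localization.Away f)).comp (MulSemiringAction.toRingHom G B g))
    (φ : Localization.Away (⟨f, hf⟩ : fixedSubring G B) →+* Localization.Away f)
    (hφ : φ.comp (algebraMap (fixedSubring G B)
        (Localization.Away (⟨f, hf⟩ : fixedSubring G B))) =
      (algebraMap B (Localization.Away f)).comp (fixedSubring G B).subtype) :
    Function.Injective φ ∧
      ∀ x : Localization.Away f, (∀ g : G, gmap g x = x) ↔ x ∈ Set.range φ := by
  have hφ' : ∀ a : fixedSubring G B,
      φ (algebraMap _ _ a) = algebraMap B (Localization.Away f) a :=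
    RingHom.congr_fun hφ
  have hgmap' : ∀ g b, gmap g (algebraMap B _ b) = algebraMap B (Localization.Away f) (g • b) :=
    fun g => RingHom.congr_fun (hgmap g)
  -- `subtype ⟨f, hf⟩` reduces to `f` only after unfolding, which instance search does not do.
  have : IsLocalization.Away ((fixedSubring G B).subtype ⟨f, hf⟩) (Localization.Away f) :=
    inferInstanceAs (IsLocalization.Away f _)
  refine ⟨IsLocalization.Away.injective_of_comp_algebraMap_eq (⟨f, hf⟩ : fixedSubring G B)
    Subtype.val_injective hφ, fun x => ⟨fun hx => ?_, ?_⟩⟩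
  · obtain ⟨n, b, hb⟩ := IsLocalization.Away.surj f x
    have hb_inv : ∀ g : G, ∃ k : ℕ, f ^ k * (g • b) = f ^ k * b := fun g =>
      IsLocalization.Away.exists_of_eq f <| by
        rw [← hgmap', ← hb, map_mul, hx g, map_pow, hgmap', hf g]
    obtain ⟨N, hN⟩ := exists_pow_mul_mem_fixedSubring hf hb_inv
    refine IsLocalization.Away.mem_range_of_mul_pow_mem_range (⟨f, hf⟩ : fixedSubring G B) φ
      (n := n + N) ⟨algebraMap _ _ (⟨_, hN⟩ : fixedSubring G B), ?_⟩
    rw [hφ', hφ', pow_add, ← mul_assoc, hb, map_mul, map_pow, mul_comm]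
  · rintro ⟨y, rfl⟩ g
    suffices (gmap g).comp φ = φ from RingHom.congr_fun this y
    refine IsLocalization.ringHom_ext (Submonoid.powers (⟨f, hf⟩ : fixedSubring G B))
      (RingHom.ext fun a => ?_)
    simp only [RingHom.comp_apply, hφ', hgmap', a.2 g]
end
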